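/- Let X and Y be radical objects of C₂(P) and Z a contractible object of C₂(P). If there exists a short exact sequence 0 → Y → Z → X → 0 in C₂(P), then Y ≅ X^* in C₂(P) and Z ≅ K_{X¹} ⊕ K^*_{X⁰}. -/

import Mathlib

open CategoryTheory

universe u

noncomputable section

variable (R : Type u) [Ring R]

structure TwoCx : Type (u + 1) where
  X1 : ModuleCat.{u} R
  X0 : ModuleCat.{u} R
  fin1 : Module.Finite R X1
  proj1 : Module.Projective R X1
  fin0 : Module.Finite R X0
  proj0 : Module.Projective R X0
  d1 : X1 ⟶ X0
  d0 : X0 ⟶ X1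
  dd1 : d1 ≫ d0 = 0
  dd0 : d0 ≫ d1 = 0

variable {R}

@[ext]
structure TwoHom (X Y : TwoCx R) : Type u where
  f1 : X.X1 ⟶ Y.X1
  f0 : X.X0 ⟶ Y.X0
  comm1 : X.d1 ≫ f0 = f1 ≫ Y.d1
  comm0 : X.d0 ≫ f1 = f0 ≫ Y.d0

instance : CategoryStruct (TwoCx R) where
  Hom := TwoHom
  id X := ⟨𝟙 X.X1, 𝟙 X.X0, by simp, by simp⟩
  comp {X Y Z} f g :=
    ⟨f.f1 ≫ g.f1, f.f0 ≫ g.f0, by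
      rw [← Category.assoc, f.comm1, Category.assoc, g.comm1, ← Category.assoc], by
      rw [← Category.assoc, f.comm0, Category.assoc, g.comm0, ← Category.assoc]⟩

@[simp] theorem id_f1 (X : TwoCx R) : TwoHom.f1 (𝟙 X) = 𝟙 X.X1 := rfl
@[simp] theorem id_f0 (X : TwoCx R) : TwoHom.f0 (𝟙 X) = 𝟙 X.X0 := rfl
@[simp] theorem comp_f1 {X Y Z : TwoCx R} (f : X ⟶ Y) (g : Y ⟶ Z) :
    TwoHom.f1 (f ≫ g) = TwoHom.f1 f ≫ TwoHom.f1 g := rfl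
@[simp] theorem comp_f0 {X Y Z : TwoCx R} (f : X ⟶ Y) (g : Y ⟶ Z) :
    TwoHom.f0 (f ≫ g) = TwoHom.f0 f ≫ TwoHom.f0 g := rfl

@[ext] theorem hom_ext {X Y : TwoCx R} {f g : X ⟶ Y}
    (h1 : TwoHom.f1 f = TwoHom.f1 g) (h0 : TwoHom.f0 f = TwoHom.f0 g) : f = g :=
  TwoHom.ext h1 h0

instance : Category (TwoCx R) where
  id_comp f := by ext <;> simp
  comp_id f := by ext <;> simp
  assoc f g h := by ext <;> simp

section HomGroup

variable {X Y : TwoCx R}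

instance : Zero (X ⟶ Y) :=
  ⟨TwoHom.mk 0 0 (by simp) (by simp)⟩

@[simp] theorem zero_f1 : TwoHom.f1 (0 : X ⟶ Y) = 0 := rfl
@[simp] theorem zero_f0 : TwoHom.f0 (0 : X ⟶ Y) = 0 := rfl

instance : Add (X ⟶ Y) :=
  ⟨fun f g => TwoHom.mk (f.f1 + g.f1) (f.f0 + g.f0)
    (by rw [Preadditive.comp_add, f.comm1, g.comm1, ← Preadditive.add_comp])
    (by rw [Preadditive.comp_add, f.comm0, g.comm0, ← Preadditive.add_comp])⟩

@[simp] theorem add_f1 (f g : X ⟶ Y) :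
    TwoHom.f1 (f + g) = TwoHom.f1 f + TwoHom.f1 g := rfl
@[simp] theorem add_f0 (f g : X ⟶ Y) :
    TwoHom.f0 (f + g) = TwoHom.f0 f + TwoHom.f0 g := rfl

instance : Neg (X ⟶ Y) :=
  ⟨fun f => TwoHom.mk (-f.f1) (-f.f0)
    (by rw [Preadditive.comp_neg, f.comm1, ← Preadditive.neg_comp])
    (by rw [Preadditive.comp_neg, f.comm0, ← Preadditive.neg_comp])⟩

@[simp] theorem neg_f1 (f : X ⟶ Y) : TwoHom.f1 (-f) = -TwoHom.f1 f := rfl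
@[simp] theorem neg_f0 (f : X ⟶ Y) : TwoHom.f0 (-f) = -TwoHom.f0 f := rfl

instance : AddCommGroup (X ⟶ Y) where
  add := (· + ·)
  zero := 0
  neg := Neg.neg
  add_assoc a b c := by ext <;> simp [add_assoc]
  zero_add a := by ext <;> simp
  add_zero a := by ext <;> simp
  add_comm a b := by ext <;> simp [add_comm]
  neg_add_cancel a := by ext <;> simp
  nsmul := nsmulRec
  zsmul := zsmulRec

@[simp] theorem sub_f1 (f g : X ⟶ Y) :
    TwoHom.f1 (f - g) = TwoHom.f1 f - TwoHom.f1 g := by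
  show TwoHom.f1 (f + -g) = _
  rw [add_f1, neg_f1, sub_eq_add_neg]

@[simp] theorem sub_f0 (f g : X ⟶ Y) :
    TwoHom.f0 (f - g) = TwoHom.f0 f - TwoHom.f0 g := by
  show TwoHom.f0 (f + -g) = _
  rw [add_f0, neg_f0, sub_eq_add_neg]

end HomGroup

instance : Preadditive (TwoCx R) where
  add_comp := by intros; ext <;> simp
  comp_add := by intros; ext <;> simp

def Homotopic {X Y : TwoCx R} (f g : X ⟶ Y) : Prop :=
  ∃ (h1 : X.X1 ⟶ Y.X0) (h0 : X.X0 ⟶ Y.X1),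
    TwoHom.f1 f - TwoHom.f1 g = h1 ≫ Y.d0 + X.d1 ≫ h0 ∧
    TwoHom.f0 f - TwoHom.f0 g = h0 ≫ Y.d1 + X.d0 ≫ h1

def Contractible (X : TwoCx R) : Prop := Homotopic (𝟙 X) (0 : X ⟶ X)

def IsHtpEquiv {X Y : TwoCx R} (f : X ⟶ Y) : Prop :=
  ∃ g : Y ⟶ X, Homotopic (f ≫ g) (𝟙 X) ∧ Homotopic (g ≫ f) (𝟙 Y)

def HtpEquiv (X Y : TwoCx R) : Prop := ∃ f : X ⟶ Y, IsHtpEquiv f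

def modRad (M : ModuleCat.{u} R) : Submodule R M :=
  sInf {N : Submodule R M | IsCoatom N}

def RadicalCx (X : TwoCx R) : Prop :=
  LinearMap.range X.d1.hom ≤ modRad X.X0 ∧ LinearMap.range X.d0.hom ≤ modRad X.X1

def dsum (X Y : TwoCx R) : TwoCx R where
  X1 := ModuleCat.of R (X.X1 × Y.X1)
  X0 := ModuleCat.of R (X.X0 × Y.X0)
  fin1 := by haveI := X.fin1; haveI := Y.fin1; exact (inferInstance : Module.Finite R (X.X1 × Y.X1))
  proj1 := by haveI := X.proj1; haveI := Y.proj1; exact (inferInstance : Module.Projective R (X.X1 × Y.X1))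
  fin0 := by haveI := X.fin0; haveI := Y.fin0; exact (inferInstance : Module.Finite R (X.X0 × Y.X0))
  proj0 := by haveI := X.proj0; haveI := Y.proj0; exact (inferInstance : Module.Projective R (X.X0 × Y.X0))
  d1 := ModuleCat.ofHom (LinearMap.prodMap X.d1.hom Y.d1.hom)
  d0 := ModuleCat.ofHom (LinearMap.prodMap X.d0.hom Y.d0.hom)
  dd1 := by
    have h1 : LinearMap.comp X.d0.hom X.d1.hom = 0 := by rw [← ModuleCat.hom_comp, X.dd1, ModuleCat.hom_zero]
    have h2 : LinearMap.comp Y.d0.hom Y.d1.hom = 0 := by rw [← ModuleCat.hom_comp, Y.dd1, ModuleCat.hom_zero]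
    apply ModuleCat.hom_ext
    show LinearMap.comp (LinearMap.prodMap X.d0.hom Y.d0.hom) (LinearMap.prodMap X.d1.hom Y.d1.hom) = 0
    rw [LinearMap.prodMap_comp, h1, h2, LinearMap.prodMap_zero]
  dd0 := by
    have h1 : LinearMap.comp X.d1.hom X.d0.hom = 0 := by rw [← ModuleCat.hom_comp, X.dd0, ModuleCat.hom_zero]
    have h2 : LinearMap.comp Y.d1.hom Y.d0.hom = 0 := by rw [← ModuleCat.hom_comp, Y.dd0, ModuleCat.hom_zero]
    apply ModuleCat.hom_ext
    show LinearMap.comp (LinearMap.prodMap X.d1.hom Y.d1.hom) (LinearMap.prodMap X.d0.hom Y.d0.hom) = 0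
    rw [LinearMap.prodMap_comp, h1, h2, LinearMap.prodMap_zero]

def kP (P : ModuleCat.{u} R) (h1 : Module.Finite R P) (h2 : Module.Projective R P) : TwoCx R :=
  ⟨P, P, h1, h2, h1, h2, 𝟙 P, 0, by simp, by simp⟩

def kS (P : ModuleCat.{u} R) (h1 : Module.Finite R P) (h2 : Module.Projective R P) : TwoCx R :=
  ⟨P, P, h1, h2, h1, h2, 0, 𝟙 P, by simp, by simp⟩

def starCx (X : TwoCx R) : TwoCx R :=
  ⟨X.X0, X.X1, X.fin0, X.proj0, X.fin1, X.proj1, -X.d0, -X.d1,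
    by simp [X.dd0], by simp [X.dd1]⟩

-- ## The homotopy category
variable (R) in
def htpRel : HomRel (TwoCx R) := fun _ _ f g => Homotopic f g

abbrev KTwo (R : Type u) [Ring R] := CategoryTheory.Quotient (htpRel R)

def KFun (R : Type u) [Ring R] : TwoCx R ⥤ KTwo R := Quotient.functor _

-- ## Short exact sequences
structure SESData (Y Z X : TwoCx R) where
  a : Y ⟶ Z
  b : Z ⟶ X
  inj1 : Function.Injective (TwoHom.f1 a)
  inj0 : Function.Injective (TwoHom.f0 a)
  surj1 : Function.Surjective (TwoHom.f1 b)
  surj0 : Function.Surjective (TwoHom.f0 b)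
  exact1 : LinearMap.range (TwoHom.f1 a).hom = LinearMap.ker (TwoHom.f1 b).hom
  exact0 : LinearMap.range (TwoHom.f0 a).hom = LinearMap.ker (TwoHom.f0 b).hom

def SESEquiv {Y X Z Z' : TwoCx R} (s : SESData Y Z X) (t : SESData Y Z' X) : Prop :=
  ∃ e : Z ≅ Z', s.a ≫ e.hom = t.a ∧ e.hom ≫ t.b = s.b

/-- The two components of a morphism `X ⟶ Y^*`, with their natural types. -/
def sf1 {X Y : TwoCx R} (f : X ⟶ starCx Y) : X.X1 →ₗ[R] Y.X0 := (TwoHom.f1 f).hom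
def sf0 {X Y : TwoCx R} (f : X ⟶ starCx Y) : X.X0 →ₗ[R] Y.X1 := (TwoHom.f0 f).hom

-- ## The middle term associated to `f : X ⟶ Y^*`
def coneCx {X Y : TwoCx R} (f : X ⟶ starCx Y) : TwoCx R where
  X1 := ModuleCat.of R (X.X1 × Y.X1)
  X0 := ModuleCat.of R (X.X0 × Y.X0)
  fin1 := by haveI := X.fin1; haveI := Y.fin1; exact (inferInstance : Module.Finite R (X.X1 × Y.X1))
  proj1 := by haveI := X.proj1; haveI := Y.proj1; exact (inferInstance : Module.Projective R (X.X1 × Y.X1))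
  fin0 := by haveI := X.fin0; haveI := Y.fin0; exact (inferInstance : Module.Finite R (X.X0 × Y.X0))
  proj0 := by haveI := X.proj0; haveI := Y.proj0; exact (inferInstance : Module.Projective R (X.X0 × Y.X0))
  d1 := ModuleCat.ofHom (LinearMap.prod (X.d1.hom ∘ₗ LinearMap.fst R X.X1 Y.X1)
    (Y.d1.hom ∘ₗ LinearMap.snd R X.X1 Y.X1 - sf1 f ∘ₗ LinearMap.fst R X.X1 Y.X1))
  d0 := ModuleCat.ofHom (LinearMap.prod (X.d0.hom ∘ₗ LinearMap.fst R X.X0 Y.X0)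
    (Y.d0.hom ∘ₗ LinearMap.snd R X.X0 Y.X0 - sf0 f ∘ₗ LinearMap.fst R X.X0 Y.X0))
  dd1 := by
    refine ModuleCat.hom_ext (LinearMap.ext fun p => Prod.ext ?_ ?_)
    · show X.d0.hom (X.d1.hom p.1) = 0
      exact DFunLike.congr_fun (congrArg ModuleCat.Hom.hom X.dd1) p.1
    · show Y.d0.hom (Y.d1.hom p.2 - sf1 f p.1) - sf0 f (X.d1.hom p.1) = 0
      have hY : Y.d0.hom (Y.d1.hom p.2) = 0 := DFunLike.congr_fun (congrArg ModuleCat.Hom.hom Y.dd1) p.2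
      have hc : sf0 f (X.d1.hom p.1) = -(Y.d0.hom (sf1 f p.1)) := DFunLike.congr_fun (congrArg ModuleCat.Hom.hom f.comm1) p.1
      rw [map_sub, hY, hc]
      simp
  dd0 := by
    refine ModuleCat.hom_ext (LinearMap.ext fun p => Prod.ext ?_ ?_)
    · show X.d1.hom (X.d0.hom p.1) = 0
      exact DFunLike.congr_fun (congrArg ModuleCat.Hom.hom X.dd0) p.1
    · show Y.d1.hom (Y.d0.hom p.2 - sf0 f p.1) - sf1 f (X.d0.hom p.1) = 0
      have hY : Y.d1.hom (Y.d0.hom p.2) = 0 := DFunLike.congr_fun (congrArg ModuleCat.Hom.hom Y.dd0) p.2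
      have hc : sf1 f (X.d0.hom p.1) = -(Y.d1.hom (sf0 f p.1)) := DFunLike.congr_fun (congrArg ModuleCat.Hom.hom f.comm0) p.1
      rw [map_sub, hY, hc]
      simp

/-- The canonical inclusion `Y ⟶ Z_f`. -/
def coneIn {X Y : TwoCx R} (f : X ⟶ starCx Y) : Y ⟶ coneCx f where
  f1 := ModuleCat.ofHom (LinearMap.inr R X.X1 Y.X1)
  f0 := ModuleCat.ofHom (LinearMap.inr R X.X0 Y.X0)
  comm1 := by
    refine ModuleCat.hom_ext (LinearMap.ext fun y => Prod.ext ?_ ?_)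
    · show (0 : X.X0) = X.d1.hom 0
      simp
    · show Y.d1.hom y = Y.d1.hom y - sf1 f 0
      simp
  comm0 := by
    refine ModuleCat.hom_ext (LinearMap.ext fun y => Prod.ext ?_ ?_)
    · show (0 : X.X1) = X.d0.hom 0
      simp
    · show Y.d0.hom y = Y.d0.hom y - sf0 f 0
      simp

/-- The canonical projection `Z_f ⟶ X`. -/
def coneOut {X Y : TwoCx R} (f : X ⟶ starCx Y) : coneCx f ⟶ X where
  f1 := ModuleCat.ofHom (LinearMap.fst R X.X1 Y.X1)
  f0 := ModuleCat.ofHom (LinearMap.fst R X.X0 Y.X0)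
  comm1 := ModuleCat.hom_ext (LinearMap.ext fun _ => rfl)
  comm0 := ModuleCat.hom_ext (LinearMap.ext fun _ => rfl)

/-- The canonical short exact sequence `0 ⟶ Y ⟶ Z_f ⟶ X ⟶ 0`. -/
def canonSES {X Y : TwoCx R} (f : X ⟶ starCx Y) : SESData Y (coneCx f) X where
  a := coneIn f
  b := coneOut f
  inj1 := LinearMap.inr_injective
  inj0 := LinearMap.inr_injective
  surj1 := LinearMap.fst_surjective
  surj0 := LinearMap.fst_surjective
  exact1 := LinearMap.range_inr R X.X1 Y.X1
  exact0 := LinearMap.range_inr R X.X0 Y.X0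

-- ## scalar endomorphisms
def scalarMod [Algebra ℂ R] (c : ℂ) (M : ModuleCat.{u} R) : M ⟶ M :=
  ModuleCat.ofHom
  { toFun := fun m => algebraMap ℂ R c • m
    map_add' := fun x y => smul_add _ x y
    map_smul' := fun r m => by
      simp only [RingHom.id_apply, smul_smul, Algebra.commutes] }

def scalarHom [Algebra ℂ R] (c : ℂ) (X : TwoCx R) : X ⟶ X where
  f1 := scalarMod c X.X1
  f0 := scalarMod c X.X0
  comm1 := by
    refine ModuleCat.hom_ext (LinearMap.ext fun x => ?_)
    exact (map_smul X.d1.hom (algebraMap ℂ R c) x).symm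
  comm0 := by
    refine ModuleCat.hom_ext (LinearMap.ext fun x => ?_)
    exact (map_smul X.d0.hom (algebraMap ℂ R c) x).symm

end

/-!
A contraction `h` of `Z` turns the extension `0 → Y →a Z →b X → 0` into a morphism
`ψ = b ∘ h ∘ a : Y ⟶ X^*`, and sections `σ` of `b` (which exist since `X` is projective) give a
morphism `ρ : K_{X¹} ⊕ K^*_{X⁰} ⟶ Z`. As `X` is radical, `ψ` is onto modulo the radical of `X^*`;
as `Y` is radical, `ρ` is onto modulo the radical of `Z`. By Nakayama both are surjective, and
comparing lengths along the extension forces `ℓ(Y¹) = ℓ(X⁰)` and `ℓ(Y⁰) = ℓ(X¹)`, so both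
surjections are bijective. Every statement in degree `0` is the one in degree `1` for the
complexes with their two degrees swapped.
-/

open Function

section Radical

variable {R : Type u} [Ring R]

theorem map_mem_modRad {M N : ModuleCat.{u} R} (f : M →ₗ[R] N) {x : M} (hx : x ∈ modRad M) :
    f x ∈ modRad N :=
  Module.le_comap_jacobson f hx

theorem Submodule.eq_top_of_sup_jacobson_eq_top {M : Type*} [AddCommGroup M] [Module R M]
    [Module.Finite R M] {N : Submodule R M} (h : N ⊔ Module.jacobson R M = ⊤) : N = ⊤ := by
  by_contra hN
  obtain ⟨C, hC, hNC⟩ := (eq_top_or_exists_le_coatom N).resolve_left hN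
  exact hC.1 (top_unique (h ▸ sup_le hNC (sInf_le hC)))

theorem surjective_of_forall_sub_mem_modRad {M : Type*} [AddCommGroup M] [Module R M]
    {N : ModuleCat.{u} R} [Module.Finite R N]
    (f : M →ₗ[R] N) (h : ∀ n, ∃ m, n - f m ∈ modRad N) : Surjective f := by
  refine LinearMap.range_eq_top.1 <| Submodule.eq_top_of_sup_jacobson_eq_top <|
    eq_top_iff.2 fun n _ => ?_
  obtain ⟨m, hm⟩ := h n
  simpa using Submodule.add_mem_sup (LinearMap.mem_range_self f m) (T := Module.jacobson R N) hm

end Radical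

section Length

variable {R M N : Type*} [Ring R] [AddCommGroup M] [Module R M] [AddCommGroup N] [Module R N]

theorem Module.length_ne_top_of_finite [IsArtinianRing R] [Module.Finite R M] :
    Module.length R M ≠ ⊤ :=
  Module.length_ne_top_iff.2 (((IsArtinianRing.tfae R M).out 0 3).1 ‹_›)

theorem bijective_of_surjective_of_length_le (f : M →ₗ[R] N) (hf : Surjective f)
    (hM : Module.length R M ≠ ⊤) (h : Module.length R M ≤ Module.length R N) : Bijective f := by
  have hN : Module.length R N ≠ ⊤ := ne_top_of_le_ne_top hM (Module.length_le_of_surjective f hf)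
  have hsum := Module.length_eq_add_of_exact _ f (Submodule.subtype_injective _) hf
    (LinearMap.exact_subtype_ker_map f)
  have hker : Module.length R (LinearMap.ker f) + Module.length R N ≤ 0 + Module.length R N := by
    rwa [zero_add, ← hsum]
  refine ⟨LinearMap.ker_eq_bot.1 (Submodule.subsingleton_iff_eq_bot.1 ?_), hf⟩
  exact Module.length_eq_zero_iff.1 (nonpos_iff_eq_zero.1 ((ENat.add_le_add_iff_right hN).1 hker))

end Length

noncomputable section Complexes

variable {R : Type u} [Ring R]

namespace TwoCx

theorem d0_d1_apply (X : TwoCx R) (x : X.X1) : X.d0 (X.d1 x) = 0 :=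
  LinearMap.congr_fun (congrArg ModuleCat.Hom.hom X.dd1) x

theorem d1_d0_apply (X : TwoCx R) (x : X.X0) : X.d1 (X.d0 x) = 0 :=
  LinearMap.congr_fun (congrArg ModuleCat.Hom.hom X.dd0) x

/-- Unlike `starCx`, this introduces no signs, so that for instance
`(s.swap.connecting c.swap).f1` is `(s.connecting c).f0` by definition. -/
def swap (X : TwoCx R) : TwoCx R :=
  ⟨X.X0, X.X1, X.fin0, X.proj0, X.fin1, X.proj1, X.d0, X.d1, X.dd0, X.dd1⟩

def isoOfBijective {X Y : TwoCx R} (f : X ⟶ Y) (h1 : Bijective f.f1) (h0 : Bijective f.f0) :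
    X ≅ Y :=
  have : IsIso f.f1 := (ConcreteCategory.isIso_iff_bijective _).2 h1
  have : IsIso f.f0 := (ConcreteCategory.isIso_iff_bijective _).2 h0
  { hom := f
    inv := ⟨inv f.f1, inv f.f0,
      by rw [IsIso.comp_inv_eq, Category.assoc, f.comm1, IsIso.inv_hom_id_assoc],
      by rw [IsIso.comp_inv_eq, Category.assoc, f.comm0, IsIso.inv_hom_id_assoc]⟩
    hom_inv_id := by ext <;> simp
    inv_hom_id := by ext <;> simp }

end TwoCx

namespace TwoHom

variable {X Y : TwoCx R} (f : X ⟶ Y)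

theorem comm1_apply (x : X.X1) : f.f0 (X.d1 x) = Y.d1 (f.f1 x) :=
  LinearMap.congr_fun (congrArg ModuleCat.Hom.hom f.comm1) x

theorem comm0_apply (x : X.X0) : f.f1 (X.d0 x) = Y.d0 (f.f0 x) :=
  LinearMap.congr_fun (congrArg ModuleCat.Hom.hom f.comm0) x

def swap : X.swap ⟶ Y.swap :=
  ⟨f.f0, f.f1, f.comm0, f.comm1⟩

end TwoHom

theorem RadicalCx.swap {X : TwoCx R} (h : RadicalCx X) : RadicalCx X.swap :=
  ⟨h.2, h.1⟩

structure Contraction (Z : TwoCx R) where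
  h1 : Z.X1 ⟶ Z.X0
  h0 : Z.X0 ⟶ Z.X1
  d0_h1_add_h0_d1 : ∀ z, Z.d0 (h1 z) + h0 (Z.d1 z) = z
  d1_h0_add_h1_d0 : ∀ z, Z.d1 (h0 z) + h1 (Z.d0 z) = z

def Contraction.swap {Z : TwoCx R} (c : Contraction Z) : Contraction Z.swap :=
  ⟨c.h0, c.h1, c.d1_h0_add_h1_d0, c.d0_h1_add_h0_d1⟩

theorem Contractible.nonempty_contraction {Z : TwoCx R} (hZ : Contractible Z) :
    Nonempty (Contraction Z) := by
  obtain ⟨h1, h0, e1, e0⟩ := hZ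
  refine ⟨⟨h1, h0, fun z => ?_, fun z => ?_⟩⟩
  · simpa using (LinearMap.congr_fun (congrArg ModuleCat.Hom.hom e1) z).symm
  · simpa using (LinearMap.congr_fun (congrArg ModuleCat.Hom.hom e0) z).symm

def dsumKLift {P Q : ModuleCat.{u} R} {hP : Module.Finite R P} {hP' : Module.Projective R P}
    {hQ : Module.Finite R Q} {hQ' : Module.Projective R Q} {Z : TwoCx R}
    (σ1 : P →ₗ[R] Z.X1) (σ0 : Q →ₗ[R] Z.X0) : dsum (kP P hP hP') (kS Q hQ hQ') ⟶ Z where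
  f1 := ModuleCat.ofHom (σ1.coprod (Z.d0.hom ∘ₗ σ0))
  f0 := ModuleCat.ofHom ((Z.d1.hom ∘ₗ σ1).coprod σ0)
  comm1 := ModuleCat.hom_ext <| LinearMap.ext fun p => by
    change Z.d1 (σ1 p.1) + σ0 0 = Z.d1 (σ1 p.1 + Z.d0 (σ0 p.2))
    simp [TwoCx.d1_d0_apply]
  comm0 := ModuleCat.hom_ext <| LinearMap.ext fun p => by
    change σ1 0 + Z.d0 (σ0 p.2) = Z.d0 (Z.d1 (σ1 p.1) + σ0 p.2)
    simp [TwoCx.d0_d1_apply]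

theorem dsumKLift_f0_bijective {P Q : ModuleCat.{u} R} {hP : Module.Finite R P}
    {hP' : Module.Projective R P} {hQ : Module.Finite R Q} {hQ' : Module.Projective R Q}
    {Z : TwoCx R} {σ1 : P →ₗ[R] Z.X1} {σ0 : Q →ₗ[R] Z.X0}
    (h : Bijective (σ0.coprod (Z.d1.hom ∘ₗ σ1))) :
    Bijective (dsumKLift σ1 σ0 : dsum (kP P hP hP') (kS Q hQ hQ') ⟶ Z).f0 := by
  have e : ⇑(dsumKLift σ1 σ0 : dsum (kP P hP hP') (kS Q hQ hQ') ⟶ Z).f0 =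
      σ0.coprod (Z.d1.hom ∘ₗ σ1) ∘ Prod.swap :=
    funext fun _ => add_comm _ _
  rw [e]
  exact h.comp (Equiv.prodComm _ _).bijective

namespace SESData

variable {X Y Z : TwoCx R} (s : SESData Y Z X)

def swap : SESData Y.swap Z.swap X.swap :=
  ⟨s.a.swap, s.b.swap, s.inj0, s.inj1, s.surj0, s.surj1, s.exact0, s.exact1⟩

theorem b_f1_a_f1_apply (y : Y.X1) : s.b.f1 (s.a.f1 y) = 0 :=
  LinearMap.mem_ker.1 (s.exact1 ▸ LinearMap.mem_range_self _ y)

theorem exists_a_f1_eq {z : Z.X1} (hz : s.b.f1 z = 0) : ∃ y, s.a.f1 y = z := by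
  have hz' : z ∈ LinearMap.ker s.b.f1.hom := hz
  obtain ⟨y, hy⟩ : z ∈ LinearMap.range s.a.f1.hom := s.exact1 ▸ hz'
  exact ⟨y, hy⟩

theorem exists_a_f0_eq {z : Z.X0} (hz : s.b.f0 z = 0) : ∃ y, s.a.f0 y = z :=
  s.swap.exists_a_f1_eq hz

theorem exists_section_f1 : ∃ σ : X.X1 →ₗ[R] Z.X1, ∀ x, s.b.f1 (σ x) = x := by
  have := X.proj1
  obtain ⟨σ, hσ⟩ := Module.projective_lifting_property s.b.f1.hom LinearMap.id s.surj1
  exact ⟨σ, LinearMap.congr_fun hσ⟩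

theorem exists_section_f0 : ∃ σ : X.X0 →ₗ[R] Z.X0, ∀ x, s.b.f0 (σ x) = x :=
  s.swap.exists_section_f1

theorem length_X1 (s : SESData Y Z X) :
    Module.length R Z.X1 = Module.length R Y.X1 + Module.length R X.X1 :=
  Module.length_eq_add_of_exact s.a.f1.hom s.b.f1.hom s.inj1 s.surj1
    (LinearMap.exact_iff.2 s.exact1.symm)

theorem coprod_section_surjective (c : Contraction Z) (hY : RadicalCx Y) {σ1 : X.X1 →ₗ[R] Z.X1}
    {σ0 : X.X0 →ₗ[R] Z.X0} (hσ1 : ∀ x, s.b.f1 (σ1 x) = x) (hσ0 : ∀ x, s.b.f0 (σ0 x) = x) :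
    Surjective (σ1.coprod (Z.d0.hom ∘ₗ σ0)) := by
  have := Z.fin1
  refine surjective_of_forall_sub_mem_modRad _ fun z => ?_
  obtain ⟨y, hy⟩ := s.exists_a_f1_eq (z := z - σ1 (s.b.f1 z)) (by rw [map_sub, hσ1, sub_self])
  set w := c.h1 (s.a.f1 y)
  obtain ⟨u, hu⟩ := s.exists_a_f0_eq (z := w - σ0 (s.b.f0 w)) (by rw [map_sub, hσ0, sub_self])
  refine ⟨(s.b.f1 z, s.b.f0 w), ?_⟩
  have hz : z - σ1 (s.b.f1 z) = Z.d0 w + c.h0 (Z.d1 (s.a.f1 y)) := by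
    rw [← hy]
    exact (c.d0_h1_add_h0_d1 _).symm
  have key : z - (σ1.coprod (Z.d0.hom ∘ₗ σ0)) (s.b.f1 z, s.b.f0 w) =
      c.h0 (s.a.f0 (Y.d1 y)) + s.a.f1 (Y.d0 u) := by
    rw [TwoHom.comm1_apply, TwoHom.comm0_apply, hu, map_sub, LinearMap.coprod_apply,
      LinearMap.comp_apply, ← sub_sub, hz]
    abel
  rw [key]
  exact add_mem (map_mem_modRad (c.h0.hom ∘ₗ s.a.f0.hom) (hY.1 ⟨y, rfl⟩))
    (map_mem_modRad s.a.f1.hom (hY.2 ⟨u, rfl⟩))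

variable (c : Contraction Z)

theorem connecting_comm1 :
    Y.d1 ≫ s.a.f0 ≫ c.h0 ≫ s.b.f1 = (s.a.f1 ≫ c.h1 ≫ s.b.f0) ≫ (starCx X).d1 :=
  ModuleCat.hom_ext <| LinearMap.ext fun y => by
    change s.b.f1 (c.h0 (s.a.f0 (Y.d1 y))) = -X.d0 (s.b.f0 (c.h1 (s.a.f1 y)))
    rw [TwoHom.comm1_apply, eq_sub_of_add_eq' (c.d0_h1_add_h0_d1 _), map_sub,
      b_f1_a_f1_apply, TwoHom.comm0_apply, zero_sub]

def connecting : Y ⟶ starCx X :=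
  ⟨s.a.f1 ≫ c.h1 ≫ s.b.f0, s.a.f0 ≫ c.h0 ≫ s.b.f1, s.connecting_comm1 c,
    s.swap.connecting_comm1 c.swap⟩

theorem connecting_f1_surjective (hX : RadicalCx X) : Surjective (s.connecting c).f1 := by
  have := (starCx X).fin1
  obtain ⟨σ, hσ⟩ := s.exists_section_f1
  refine surjective_of_forall_sub_mem_modRad (s.connecting c).f1.hom fun x => ?_
  obtain ⟨z, rfl⟩ := s.surj0 x
  set w := σ (X.d0 (s.b.f0 z))
  obtain ⟨y, hy⟩ := s.exists_a_f1_eq (z := Z.d0 z - w)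
    (by rw [map_sub, hσ, TwoHom.comm0_apply, sub_self])
  refine ⟨y, ?_⟩
  have hz : s.b.f0 z = s.b.f0 (Z.d1 (c.h0 z)) + s.b.f0 (c.h1 (Z.d0 z)) := by
    rw [← map_add, c.d1_h0_add_h1_d0]
  have key : s.b.f0 z - s.b.f0 (c.h1 (s.a.f1 y)) = X.d1 (s.b.f1 (c.h0 z)) + s.b.f0 (c.h1 w) := by
    rw [hy, map_sub, map_sub, ← TwoHom.comm1_apply, hz]
    abel
  change s.b.f0 z - s.b.f0 (c.h1 (s.a.f1 y)) ∈ modRad X.X0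
  rw [key]
  exact add_mem (hX.1 ⟨_, rfl⟩)
    (map_mem_modRad (s.b.f0.hom ∘ₗ c.h1.hom ∘ₗ σ) (hX.2 ⟨_, rfl⟩))

variable [IsArtinianRing R]

theorem length_Y1_eq (s : SESData Y Z X) (c : Contraction Z)
    (hX : RadicalCx X) (hY : RadicalCx Y) : Module.length R Y.X1 = Module.length R X.X0 := by
  have := X.fin1
  obtain ⟨σ1, hσ1⟩ := s.exists_section_f1
  obtain ⟨σ0, hσ0⟩ := s.exists_section_f0
  have hψ := Module.length_le_of_surjective _ (s.connecting_f1_surjective c hX)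
  have hρ := Module.length_le_of_surjective _ (s.coprod_section_surjective c hY hσ1 hσ0)
  rw [Module.length_prod, s.length_X1, add_comm] at hρ
  exact le_antisymm ((ENat.add_le_add_iff_left Module.length_ne_top_of_finite).1 hρ) hψ

theorem connecting_f1_bijective (hX : RadicalCx X) (hY : RadicalCx Y) :
    Bijective (s.connecting c).f1 :=
  have := Y.fin1
  bijective_of_surjective_of_length_le _ (s.connecting_f1_surjective c hX)
    Module.length_ne_top_of_finite (s.length_Y1_eq c hX hY).le

theorem coprod_section_bijective (c : Contraction Z) (hX : RadicalCx X) (hY : RadicalCx Y)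
    {σ1 : X.X1 →ₗ[R] Z.X1} {σ0 : X.X0 →ₗ[R] Z.X0} (hσ1 : ∀ x, s.b.f1 (σ1 x) = x)
    (hσ0 : ∀ x, s.b.f0 (σ0 x) = x) :
    Bijective (σ1.coprod (Z.d0.hom ∘ₗ σ0)) :=
  have := X.fin1
  have := X.fin0
  bijective_of_surjective_of_length_le _ (s.coprod_section_surjective c hY hσ1 hσ0)
    Module.length_ne_top_of_finite
    (by rw [Module.length_prod, s.length_X1, s.length_Y1_eq c hX hY, add_comm])

end SESData

end Complexes

/-- If `X`, `Y` are radical, `Z` is contractible and there is a short exact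
sequence `0 → Y → Z → X → 0` in `C₂(P)`, then `Y ≅ X^*` and `Z ≅ K_{X¹} ⊕ K^*_{X⁰}`. -/
theorem statement_8 {A : Type u} [Ring A] [Algebra ℂ A] [FiniteDimensional ℂ A]
    (X Y Z : TwoCx Aᵐᵒᵖ) (hX : RadicalCx X) (hY : RadicalCx Y) (hZ : Contractible Z)
    (s : SESData Y Z X) :
    Nonempty (Y ≅ starCx X) ∧
    Nonempty (Z ≅ dsum (kP X.X1 X.fin1 X.proj1) (kS X.X0 X.fin0 X.proj0)) := by
  have : IsArtinianRing Aᵐᵒᵖ := isArtinian_of_tower ℂ inferInstance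
  obtain ⟨c⟩ := hZ.nonempty_contraction
  obtain ⟨σ1, hσ1⟩ := s.exists_section_f1
  obtain ⟨σ0, hσ0⟩ := s.exists_section_f0
  exact ⟨⟨TwoCx.isoOfBijective (s.connecting c) (s.connecting_f1_bijective c hX hY)
      (s.swap.connecting_f1_bijective c.swap hX.swap hY.swap)⟩,
    ⟨(TwoCx.isoOfBijective (dsumKLift σ1 σ0) (s.coprod_section_bijective c hX hY hσ1 hσ0)
      (dsumKLift_f0_bijective
        (s.swap.coprod_section_bijective c.swap hX.swap hY.swap hσ0 hσ1))).symm⟩⟩
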